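/- Let f : ℝⁿ → ℝ be locally Lipschitz at x and let L : ℝᵐ → ℝⁿ be continuously differentiable at a point u with L(u) = x. Then for every v ∈ ℝᵐ, (f∘L)°(u,v) ≤ f°(x, dL(u)v), and consequently ∂_c(f∘L)(u) ⊆ {dL(u)ᵀ ξ : ξ ∈ ∂_c f(x)} (the chain rule inclusion for Clarke subdifferentials). -/

import Mathlib

open Filter Set

noncomputable def clarkeDeriv {E : Type*} [NormedAddCommGroup E] [NormedSpace ℝ E]
    (f : E → ℝ) (x v : E) : ℝ :=
  Filter.limsup (fun p : E × ℝ => (f (p.1 + p.2 • v) - f p.1) / p.2)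
    ((nhds x) ×ˢ (nhdsWithin 0 (Set.Ioi 0)))

noncomputable def clarkeSubdiff {E : Type*} [NormedAddCommGroup E] [InnerProductSpace ℝ E]
    (f : E → ℝ) (x : E) : Set E :=
  {ξ | ∀ v, (inner ℝ ξ v : ℝ) ≤ clarkeDeriv f x v}

def whitneyCone {E : Type*} [NormedAddCommGroup E] [NormedSpace ℝ E]
    (A B : Set E) (p : E) : Set E :=
  {w | ∃ (x y : ℕ → E) (c : ℕ → ℝ), (∀ n, x n ∈ A) ∧ (∀ n, y n ∈ B) ∧ (∀ n, 0 < c n) ∧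
    Filter.Tendsto x Filter.atTop (nhds p) ∧ Filter.Tendsto y Filter.atTop (nhds p) ∧
    Filter.Tendsto (fun n => c n • (x n - y n)) Filter.atTop (nhds w)}

def epi {E : Type*} (f : E → ℝ) : Set (E × ℝ) := {p | f p.1 ≤ p.2}


/-! Strict differentiability of `L` at `u` says that the quotients `t⁻¹ • (L (y + t • v) - L y)`
tend to `dL(u) v` as `y → u`, `t ↓ 0`. The Clarke quotient of `f ∘ L` at `(y, t)` in direction `v`
is the Clarke quotient of `f` at `(L y, t)` in this direction, and Clarke quotients of a Lipschitz
function are Lipschitz in the direction, which gives `(f ∘ L)°(u, v) ≤ f°(x, dL(u) v)`.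

For the inclusion, `f°(x, ·)` is sublinear and bounded by `K ‖·‖`. If `η ∈ ∂_c (f ∘ L)(u)` then
`⟪η, w⟫ ≤ f°(x, dL(u) w)`, so `⟪η, ·⟫` vanishes on `ker dL(u)` and factors through `dL(u)`;
Hahn–Banach extends the factor to a linear functional below `f°(x, ·)`, which is therefore
bounded, and its Riesz representative is the required `ξ`. -/

open Topology Asymptotics

def clarkeFilter {X : Type*} [TopologicalSpace X] (x : X) : Filter (X × ℝ) := 𝓝 x ×ˢ 𝓝[>] 0

instance {X : Type*} [TopologicalSpace X] (x : X) : (clarkeFilter x).NeBot := by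
  unfold clarkeFilter; infer_instance

theorem eventually_pos_of_tendsto_clarkeFilter {X α : Type*} [TopologicalSpace X] {x : X}
    {l : Filter α} {m : α → X × ℝ} (hm : Tendsto m l (clarkeFilter x)) :
    ∀ᶠ a in l, 0 < (m a).2 :=
  (tendsto_snd.comp hm).eventually self_mem_nhdsWithin

section ClarkeDerivative

variable {E : Type*} [NormedAddCommGroup E] [NormedSpace ℝ E]

noncomputable def clarkeQuot (f : E → ℝ) (v : E) (p : E × ℝ) : ℝ :=
  (f (p.1 + p.2 • v) - f p.1) / p.2

theorem clarkeDeriv_eq_limsup (f : E → ℝ) (x v : E) :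
    clarkeDeriv f x v = limsup (clarkeQuot f v) (clarkeFilter x) := rfl

theorem LipschitzOnWith.abs_clarkeQuot_sub_le {f : E → ℝ} {s : Set E} {K : NNReal}
    (hK : LipschitzOnWith K f s) {p : E × ℝ} {v w : E} (hp : 0 < p.2)
    (hw : p.1 + p.2 • w ∈ s) (hv : p.1 + p.2 • v ∈ s) :
    |clarkeQuot f w p - clarkeQuot f v p| ≤ K * ‖w - v‖ := by
  rw [clarkeQuot, clarkeQuot, ← sub_div, abs_div, abs_of_pos hp, div_le_iff₀ hp,
    sub_sub_sub_cancel_right, ← Real.dist_eq]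
  calc dist (f (p.1 + p.2 • w)) (f (p.1 + p.2 • v))
      ≤ K * dist (p.1 + p.2 • w) (p.1 + p.2 • v) := hK.dist_le_mul _ hw _ hv
    _ = K * ‖w - v‖ * p.2 := by
      rw [dist_add_left, dist_eq_norm, ← smul_sub, norm_smul, Real.norm_of_nonneg hp.le]; ring

theorem LipschitzOnWith.abs_clarkeQuot_le {f : E → ℝ} {s : Set E} {K : NNReal}
    (hK : LipschitzOnWith K f s) {p : E × ℝ} {v : E} (hp : 0 < p.2) (h₀ : p.1 ∈ s)
    (hv : p.1 + p.2 • v ∈ s) :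
    |clarkeQuot f v p| ≤ K * ‖v‖ := by
  simpa [clarkeQuot] using hK.abs_clarkeQuot_sub_le hp hv (v := 0) (by simpa using h₀)

section

variable {α : Type*} {l : Filter α} {m : α → E × ℝ} {x v : E} {w : α → E}

theorem tendsto_add_smul_of_tendsto_clarkeFilter (hm : Tendsto m l (clarkeFilter x))
    (hw : Tendsto w l (𝓝 v)) :
    Tendsto (fun a => (m a).1 + (m a).2 • w a) l (𝓝 x) := by
  have h₁ : Tendsto (fun a => (m a).1) l (𝓝 x) := tendsto_fst.comp hm
  have h₂ : Tendsto (fun a => (m a).2) l (𝓝 0) :=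
    (tendsto_snd.comp hm).mono_right nhdsWithin_le_nhds
  simpa using h₁.add (h₂.smul hw)

variable {f : E → ℝ} {s : Set E} {K : NNReal}

theorem LipschitzOnWith.eventually_abs_clarkeQuot_le (hK : LipschitzOnWith K f s)
    (hs : s ∈ 𝓝 x) (hm : Tendsto m l (clarkeFilter x)) (hw : Tendsto w l (𝓝 v)) :
    ∀ᶠ a in l, |clarkeQuot f (w a) (m a)| ≤ K * (‖v‖ + 1) := by
  filter_upwards [eventually_pos_of_tendsto_clarkeFilter hm, (tendsto_fst.comp hm) hs,
    tendsto_add_smul_of_tendsto_clarkeFilter hm hw hs,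
    hw.norm.eventually (eventually_le_nhds (lt_add_one ‖v‖))] with a hpos h₀ hw hnorm
  exact (hK.abs_clarkeQuot_le hpos h₀ hw).trans (by gcongr)

theorem LipschitzOnWith.isBoundedUnder_clarkeQuot (hK : LipschitzOnWith K f s)
    (hs : s ∈ 𝓝 x) (hm : Tendsto m l (clarkeFilter x)) (hw : Tendsto w l (𝓝 v)) :
    l.IsBoundedUnder (· ≤ ·) (fun a => clarkeQuot f (w a) (m a)) ∧
      l.IsBoundedUnder (· ≥ ·) (fun a => clarkeQuot f (w a) (m a)) :=
  isBoundedUnder_le_abs.1 (isBoundedUnder_of_eventually_le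
    (hK.eventually_abs_clarkeQuot_le hs hm hw))

theorem LipschitzOnWith.limsup_clarkeQuot_le [l.NeBot] (hK : LipschitzOnWith K f s)
    (hs : s ∈ 𝓝 x) (hm : Tendsto m l (clarkeFilter x)) (hw : Tendsto w l (𝓝 v)) :
    limsup (fun a => clarkeQuot f (w a) (m a)) l ≤ clarkeDeriv f x v := by
  have hbdd := hK.isBoundedUnder_clarkeQuot hs hm hw
  have hbdd_v := hK.isBoundedUnder_clarkeQuot hs hm (tendsto_const_nhds (x := v))
  have hbdd_x := hK.isBoundedUnder_clarkeQuot hs tendsto_id (tendsto_const_nhds (x := v))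
  refine le_of_forall_pos_le_add fun ε hε => ?_
  have hsmall : ∀ᶠ a in l, K * ‖w a - v‖ < ε := by
    have : Tendsto (fun a => K * ‖w a - v‖) l (𝓝 0) := by
      simpa using ((hw.sub_const v).norm.const_mul (K : ℝ))
    exact this.eventually (eventually_lt_nhds hε)
  have hclose : ∀ᶠ a in l, clarkeQuot f (w a) (m a) ≤ clarkeQuot f v (m a) + ε := by
    filter_upwards [hsmall, eventually_pos_of_tendsto_clarkeFilter hm,
      tendsto_add_smul_of_tendsto_clarkeFilter hm hw hs,
      tendsto_add_smul_of_tendsto_clarkeFilter hm tendsto_const_nhds hs] with a hsmall hpos hw hv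
    linarith [(abs_le.1 (hK.abs_clarkeQuot_sub_le hpos hw hv)).2]
  calc limsup (fun a => clarkeQuot f (w a) (m a)) l
      ≤ limsup (fun a => clarkeQuot f v (m a) + ε) l :=
        limsup_le_limsup hclose hbdd.2.isCoboundedUnder_le
          (isBoundedUnder_le_add hbdd_v.1 isBoundedUnder_const)
    _ = limsup (fun a => clarkeQuot f v (m a)) l + ε :=
        limsup_add_const l _ ε hbdd_v.1 hbdd_v.2.isCoboundedUnder_le
    _ ≤ clarkeDeriv f x v + ε := by
        gcongr
        exact hm.limsup_comp_le_limsup hbdd_v.2.isCoboundedUnder_le hbdd_x.1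

end

variable {f : E → ℝ} {s : Set E} {K : NNReal} {x : E}

theorem LipschitzOnWith.clarkeDeriv_le (hK : LipschitzOnWith K f s) (hs : s ∈ 𝓝 x) (v : E) :
    clarkeDeriv f x v ≤ K * ‖v‖ := by
  have hid : Tendsto id (clarkeFilter x) (clarkeFilter x) := tendsto_id
  refine limsup_le_of_le
    (hK.isBoundedUnder_clarkeQuot hs hid (tendsto_const_nhds (x := v))).2.isCoboundedUnder_le ?_
  filter_upwards [eventually_pos_of_tendsto_clarkeFilter hid, (tendsto_fst.comp hid) hs,
    tendsto_add_smul_of_tendsto_clarkeFilter hid (tendsto_const_nhds (x := v)) hs]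
    with p hpos h₀ hv
  exact (le_abs_self _).trans (hK.abs_clarkeQuot_le hpos h₀ hv)

theorem LipschitzOnWith.clarkeDeriv_smul_le (hK : LipschitzOnWith K f s) (hs : s ∈ 𝓝 x)
    {c : ℝ} (hc : 0 < c) (v : E) :
    clarkeDeriv f x (c • v) ≤ c * clarkeDeriv f x v := by
  set τ : E × ℝ → E × ℝ := fun p => (p.1, c * p.2)
  have hτ : Tendsto τ (clarkeFilter x) (clarkeFilter x) :=
    tendsto_id.prodMap <| by
      simpa only [comap_mulLeft_nhdsGT_zero hc] using tendsto_comap (f := (c * ·)) (x := 𝓝[>] 0)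
  have hq : clarkeQuot f (c • v) = fun p => c * clarkeQuot f v (τ p) := by
    funext p
    rw [clarkeQuot, clarkeQuot, smul_smul, mul_comm p.2 c, ← mul_div_assoc,
      mul_div_mul_left _ _ hc.ne']
  have hbdd := hK.isBoundedUnder_clarkeQuot hs hτ (tendsto_const_nhds (x := v))
  calc clarkeDeriv f x (c • v)
      = limsup (fun p => c * clarkeQuot f v (τ p)) (clarkeFilter x) := by
        rw [clarkeDeriv_eq_limsup, hq]
    _ = c * limsup (fun p => clarkeQuot f v (τ p)) (clarkeFilter x) :=
        ((monotone_mul_left_of_nonneg hc.le).map_limsup_of_continuousAt _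
          (continuous_const_mul c).continuousAt hbdd.1 hbdd.2.isCoboundedUnder_le).symm
    _ ≤ c * clarkeDeriv f x v := by
        gcongr
        exact hK.limsup_clarkeQuot_le hs hτ tendsto_const_nhds

theorem LipschitzOnWith.clarkeDeriv_smul (hK : LipschitzOnWith K f s) (hs : s ∈ 𝓝 x)
    {c : ℝ} (hc : 0 < c) (v : E) :
    clarkeDeriv f x (c • v) = c * clarkeDeriv f x v := by
  refine (hK.clarkeDeriv_smul_le hs hc v).antisymm ?_
  have h := hK.clarkeDeriv_smul_le hs (inv_pos.2 hc) (c • v)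
  rw [inv_smul_smul₀ hc.ne'] at h
  rwa [le_inv_mul_iff₀ hc] at h

theorem LipschitzOnWith.clarkeDeriv_add_le (hK : LipschitzOnWith K f s) (hs : s ∈ 𝓝 x)
    (z w : E) :
    clarkeDeriv f x (z + w) ≤ clarkeDeriv f x z + clarkeDeriv f x w := by
  set σ : E × ℝ → E × ℝ := fun p => (p.1 + p.2 • z, p.2)
  have hσ : Tendsto σ (clarkeFilter x) (clarkeFilter x) :=
    (tendsto_add_smul_of_tendsto_clarkeFilter tendsto_id tendsto_const_nhds).prodMk tendsto_snd
  have hq : clarkeQuot f (z + w) = fun p => clarkeQuot f z p + clarkeQuot f w (σ p) := by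
    funext p
    simp only [clarkeQuot, σ, smul_add, add_assoc]
    ring
  have hz := hK.isBoundedUnder_clarkeQuot hs tendsto_id (tendsto_const_nhds (x := z))
  have hw := hK.isBoundedUnder_clarkeQuot hs hσ (tendsto_const_nhds (x := w))
  rw [clarkeDeriv_eq_limsup, hq]
  calc _ ≤ limsup (clarkeQuot f z) (clarkeFilter x) +
        limsup (fun p => clarkeQuot f w (σ p)) (clarkeFilter x) :=
        limsup_add_le hz.2 hz.1 hw.2.isCoboundedUnder_le hw.1
    _ ≤ clarkeDeriv f x z + clarkeDeriv f x w :=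
        add_le_add le_rfl (hK.limsup_clarkeQuot_le hs hσ tendsto_const_nhds)

end ClarkeDerivative

section ChainRule

variable {E F : Type*} [NormedAddCommGroup E] [NormedSpace ℝ E]
  [NormedAddCommGroup F] [NormedSpace ℝ F]

theorem HasStrictFDerivAt.tendsto_inv_smul_sub {L : E → F} {A : E →L[ℝ] F} {u : E}
    (hL : HasStrictFDerivAt L A u) (v : E) :
    Tendsto (fun p : E × ℝ => p.2⁻¹ • (L (p.1 + p.2 • v) - L p.1)) (clarkeFilter u)
      (𝓝 (A v)) := by
  have hid : Tendsto id (clarkeFilter u) (clarkeFilter u) := tendsto_id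
  have hpair : Tendsto (fun p : E × ℝ => (p.1 + p.2 • v, p.1)) (clarkeFilter u) (𝓝 (u, u)) :=
    (tendsto_add_smul_of_tendsto_clarkeFilter hid tendsto_const_nhds).prodMk_nhds
      (tendsto_fst.comp hid)
  have hpos : ∀ᶠ p : E × ℝ in clarkeFilter u, 0 < p.2 := eventually_pos_of_tendsto_clarkeFilter hid
  have ho := (isBigO_refl (fun p : E × ℝ => p.2⁻¹) (clarkeFilter u)).smul_isLittleO
    (hL.isLittleO.comp_tendsto hpair)
  have hv : (fun p : E × ℝ => p.2⁻¹ • (p.1 + p.2 • v - p.1)) =ᶠ[clarkeFilter u] fun _ => v := by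
    filter_upwards [hpos] with p hp
    simp [inv_smul_smul₀ hp.ne']
  have hrem := (isLittleO_one_iff ℝ).1 <|
    (ho.congr' EventuallyEq.rfl hv).trans_isBigO (isBigO_const_const v one_ne_zero _)
  refine tendsto_sub_nhds_zero_iff.1 (hrem.congr' ?_)
  filter_upwards [hpos] with p hp
  simp [smul_sub, map_smul, inv_smul_smul₀ hp.ne']

theorem LipschitzOnWith.clarkeDeriv_comp_le {f : F → ℝ} {s : Set F} {K : NNReal} {x : F}
    (hK : LipschitzOnWith K f s) (hs : s ∈ 𝓝 x) {L : E → F} {A : E →L[ℝ] F} {u : E}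
    (hx : L u = x) (hL : HasStrictFDerivAt L A u) (v : E) :
    clarkeDeriv (f ∘ L) u v ≤ clarkeDeriv f x (A v) := by
  have hm : Tendsto (fun p : E × ℝ => (L p.1, p.2)) (clarkeFilter u) (clarkeFilter x) :=
    (hx ▸ hL.continuousAt.tendsto).prodMap tendsto_id
  have hq : clarkeQuot (f ∘ L) v =ᶠ[clarkeFilter u]
      fun p => clarkeQuot f (p.2⁻¹ • (L (p.1 + p.2 • v) - L p.1)) (L p.1, p.2) := by
    filter_upwards [eventually_pos_of_tendsto_clarkeFilter tendsto_id] with p (hp : 0 < p.2)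
    simp [clarkeQuot, smul_smul, mul_inv_cancel₀ hp.ne']
  rw [clarkeDeriv_eq_limsup, limsup_congr hq]
  exact hK.limsup_clarkeQuot_le hs hm (hL.tendsto_inv_smul_sub v)

end ChainRule

theorem exists_comp_eq_of_le_sublinear_comp {E F : Type*} [AddCommGroup E] [Module ℝ E]
    [AddCommGroup F] [Module ℝ F] (A : E →ₗ[ℝ] F) (φ : E →ₗ[ℝ] ℝ) (N : F → ℝ)
    (N_hom : ∀ c : ℝ, 0 < c → ∀ z, N (c • z) = c * N z) (N_add : ∀ z w, N (z + w) ≤ N z + N w)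
    (hφ : ∀ w, φ w ≤ N (A w)) :
    ∃ g : F →ₗ[ℝ] ℝ, g.comp A = φ ∧ ∀ z, g z ≤ N z := by
  have N_zero : N 0 = 0 := by
    have := N_hom 2 two_pos 0
    rw [smul_zero] at this
    linarith
  have hker : φ ∈ (LinearMap.ker A).dualAnnihilator := by
    refine (Submodule.mem_dualAnnihilator φ).2 fun k hk => le_antisymm ?_ ?_
    · simpa [LinearMap.mem_ker.1 hk, N_zero] using hφ k
    · simpa [LinearMap.mem_ker.1 hk, N_zero] using hφ (-k)
  obtain ⟨h, rfl⟩ := (LinearMap.range_dualMap_eq_dualAnnihilator_ker A ▸ hker :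
    φ ∈ LinearMap.range A.dualMap)
  obtain ⟨g, hg_ext, hg_le⟩ := exists_extension_of_le_sublinear
    ⟨LinearMap.range A, h.domRestrict _⟩ N N_hom N_add (by
      rintro ⟨_, w, rfl⟩
      exact hφ w)
  exact ⟨g, LinearMap.ext fun w => hg_ext ⟨A w, w, rfl⟩, hg_le⟩

theorem exists_inner_le_of_inner_le_sublinear_comp {E F : Type*} [NormedAddCommGroup E]
    [InnerProductSpace ℝ E] [NormedAddCommGroup F] [InnerProductSpace ℝ F] [CompleteSpace F]
    (A : E →ₗ[ℝ] F) (N : F → ℝ)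
    (N_hom : ∀ c : ℝ, 0 < c → ∀ z, N (c • z) = c * N z) (N_add : ∀ z w, N (z + w) ≤ N z + N w)
    {C : ℝ} (hN : ∀ z, N z ≤ C * ‖z‖) {η : E} (hη : ∀ w, inner ℝ η w ≤ N (A w)) :
    ∃ ξ : F, (∀ z, inner ℝ ξ z ≤ N z) ∧ ∀ w, inner ℝ η w = inner ℝ ξ (A w) := by
  obtain ⟨g, hgA, hgN⟩ := exists_comp_eq_of_le_sublinear_comp A (innerₛₗ ℝ η) N N_hom N_add hη
  have hg_bound : ∀ z, ‖g z‖ ≤ C * ‖z‖ := fun z => by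
    refine abs_le.2 ⟨?_, (hgN z).trans (hN z)⟩
    have := (hgN (-z)).trans (hN (-z))
    rw [map_neg, norm_neg] at this
    linarith
  refine ⟨(InnerProductSpace.toDual ℝ F).symm (g.mkContinuous C hg_bound), fun z => ?_,
    fun w => ?_⟩
  · simpa using hgN z
  · simpa using (LinearMap.congr_fun hgA w).symm

theorem clarkeSubdiff_comp_subset {E F : Type*} [NormedAddCommGroup E] [InnerProductSpace ℝ E]
    [NormedAddCommGroup F] [InnerProductSpace ℝ F] [CompleteSpace F] {f : F → ℝ} {s : Set F}
    {K : NNReal} {x : F} (hK : LipschitzOnWith K f s) (hs : s ∈ 𝓝 x) {L : E → F}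
    {A : E →L[ℝ] F} {u : E} (hx : L u = x) (hL : HasStrictFDerivAt L A u) :
    clarkeSubdiff (f ∘ L) u ⊆
      {η | ∃ ξ ∈ clarkeSubdiff f x, ∀ w, inner ℝ η w = inner ℝ ξ (A w)} := by
  intro η hη
  exact exists_inner_le_of_inner_le_sublinear_comp (A : E →ₗ[ℝ] F) (clarkeDeriv f x)
    (fun _ hc z => hK.clarkeDeriv_smul hs hc z) (hK.clarkeDeriv_add_le hs) (hK.clarkeDeriv_le hs)
    fun w => (hη w).trans (hK.clarkeDeriv_comp_le hs hx hL w)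

theorem stmt17 {m n : ℕ} (f : EuclideanSpace ℝ (Fin n) → ℝ)
    (L : EuclideanSpace ℝ (Fin m) → EuclideanSpace ℝ (Fin n))
    (u : EuclideanSpace ℝ (Fin m)) (x : EuclideanSpace ℝ (Fin n)) (hx : L u = x)
    (hL : ContDiffAt ℝ 1 L u)
    (hf : ∃ s ∈ nhds x, ∃ K : NNReal, LipschitzOnWith K f s) :
    (∀ v, clarkeDeriv (f ∘ L) u v ≤ clarkeDeriv f x (fderiv ℝ L u v)) ∧
    clarkeSubdiff (f ∘ L) u ⊆
      {η | ∃ ξ ∈ clarkeSubdiff f x, ∀ w, (inner ℝ η w : ℝ) = (inner ℝ ξ (fderiv ℝ L u w) : ℝ)} := by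
  obtain ⟨s, hs, K, hK⟩ := hf
  have hstrict := hL.hasStrictFDerivAt one_ne_zero
  exact ⟨hK.clarkeDeriv_comp_le hs hx hstrict, clarkeSubdiff_comp_subset hK hs hx hstrict⟩
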